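/- arXiv:2011.14219 — 3 statements merged into one kernel-verified Lean document; each statement's English description precedes it below -/
import Mathlib

section
/- Suppose the norm ‖·‖ on ℝ^k satisfies Assumption 1, 0 < γ₂ ≤ γ₁ ≤ 1, 0 < C₁ ≤ C₂, and Λ₊,V(γ₁,C₁) ⊆ Λ₊,V(γ₂,C₂). Fix b > 0, design points x₁,…,x_n ∈ ℝ^k, and σ : ℝ^k → (0,∞). Define f₁*(x) := C₁‖(x)_{V+}‖^{γ₁} and f₂*(x) := max{ b − C₂‖(x)_{V−}‖^{γ₂}, C₁‖(x)_{V+}‖^{γ₁} }. Then f₁* ∈ Λ₊,V(γ₁,C₁), f₂* ∈ Λ₊,V(γ₂,C₂), f₂*(0) − f₁*(0) = b, and for every f₁ ∈ Λ₊,V(γ₁,C₁) and f₂ ∈ Λ₊,V(γ₂,C₂) with f₂(0) − f₁(0) = b one has Σ_{i=1}^n ((f₂(x_i) − f₁(x_i))/σ(x_i))² ≥ Σ_{i=1}^n ((b − C₁‖(x_i)_{V+}‖^{γ₁} − C₂‖(x_i)_{V−}‖^{γ₂})₊/σ(x_i))², with equality when (f₁,f₂) = (f₁*,f₂*). Consequently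 ω⁻¹(b, Λ₊,V(γ₁,C₁), Λ₊,V(γ₂,C₂))² = Σ_{i=1}^n ((b − C₁‖(x_i)_{V+}‖^{γ₁} − C₂‖(x_i)_{V−}‖^{γ₂})₊/σ(x_i))². -/
open MeasureTheory Filter Finset

/-- Positive part of a vector relative to coordinate set `V`. -/
def vplus {k : ℕ} (V : Finset (Fin k)) (z : Fin k → ℝ) : Fin k → ℝ :=
  fun j => if j ∈ V then max (z j) 0 else z j

/-- Negative part of a vector relative to coordinate set `V`. -/
def vminus {k : ℕ} (V : Finset (Fin k)) (z : Fin k → ℝ) : Fin k → ℝ :=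
  vplus V (-z)

/-- A norm on `ℝ^k` satisfying Assumption 1 (monotone in the magnitude of each coordinate). -/
structure MonNorm (k : ℕ) where
  N : (Fin k → ℝ) → ℝ
  add_le : ∀ x y, N (x + y) ≤ N x + N y
  smul_eq : ∀ (a : ℝ) (x), N (a • x) = |a| * N x
  eq_zero_iff : ∀ x, N x = 0 ↔ x = 0
  mono : ∀ z w : Fin k → ℝ, (∀ j, |z j| ≤ |w j|) → N z ≤ N w

/-- Hölder continuity with exponent `γ` and constant `C` w.r.t. the norm `N`. -/
def HolderW {k : ℕ} (N : (Fin k → ℝ) → ℝ) (γ C : ℝ) (f : (Fin k → ℝ) → ℝ) : Prop :=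
  ∀ x z : Fin k → ℝ, |f x - f z| ≤ C * N (x - z) ^ γ

/-- Coordinatewise monotonicity w.r.t. the coordinates in `V`. -/
def MonoV {k : ℕ} (V : Finset (Fin k)) (f : (Fin k → ℝ) → ℝ) : Prop :=
  ∀ x z : Fin k → ℝ, (∀ j ∈ V, z j ≤ x j) → (∀ j ∉ V, x j = z j) → f z ≤ f x

/-- The monotone Hölder class `Λ₊,V(γ,C)`. -/
def Lam {k : ℕ} (V : Finset (Fin k)) (N : (Fin k → ℝ) → ℝ) (γ C : ℝ) :
    Set ((Fin k → ℝ) → ℝ) :=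
  {f | HolderW N γ C f ∧ MonoV V f}

/-- Inverse ordered modulus of continuity for the linear functional `f ↦ f(0)`:
the infimum of the root-mean-square distance at the design points over pairs
`f ∈ F`, `g ∈ G` with `g(0) − f(0) = b`. -/
noncomputable def invMod {k : ℕ} (n : ℕ) (x : Fin n → (Fin k → ℝ))
    (σ : (Fin k → ℝ) → ℝ) (b : ℝ) (F G : Set ((Fin k → ℝ) → ℝ)) : ℝ :=
  sInf {r : ℝ | ∃ f ∈ F, ∃ g ∈ G, g 0 - f 0 = b ∧
    r = Real.sqrt (∑ i, ((g (x i) - f (x i)) / σ (x i)) ^ 2)}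

lemma MonNorm.nonneg {k : ℕ} (Nm : MonNorm k) (x : Fin k → ℝ) : 0 ≤ Nm.N x := by
  have h0 : Nm.N 0 = 0 := (Nm.eq_zero_iff 0).mpr rfl
  have hneg : Nm.N (-x) = Nm.N x := by
    have := Nm.smul_eq (-1) x
    simpa using this
  have h := Nm.add_le x (-x)
  simp only [add_neg_cancel, h0, hneg] at h
  linarith

lemma MonNorm.neg {k : ℕ} (Nm : MonNorm k) (x : Fin k → ℝ) : Nm.N (-x) = Nm.N x := by
  have := Nm.smul_eq (-1) x; simpa using this

lemma MonNorm.abs_sub {k : ℕ} (Nm : MonNorm k) (u v : Fin k → ℝ) :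
    |Nm.N u - Nm.N v| ≤ Nm.N (u - v) := by
  rw [abs_sub_le_iff]
  constructor
  · have := Nm.add_le (u - v) v; simpa using this
  · have := Nm.add_le (v - u) u
    have hn : Nm.N (v - u) = Nm.N (u - v) := by
      rw [← Nm.neg (u - v)]; congr 1; abel
    simp only [sub_add_cancel] at this
    linarith [this, hn ▸ this]

/-- subadditivity of `·^γ` on nonneg reals for `0 ≤ γ ≤ 1`. -/
lemma rpow_abs_sub_le {a c γ : ℝ} (ha : 0 ≤ a) (hc : 0 ≤ c) (hγ0 : 0 < γ) (hγ1 : γ ≤ 1) :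
    |a ^ γ - c ^ γ| ≤ |a - c| ^ γ := by
  have key : ∀ p q : ℝ, 0 ≤ p → 0 ≤ q → q ≤ p → p ^ γ - q ^ γ ≤ (p - q) ^ γ := by
    intro p q hp hq hqp
    have h := NNReal.rpow_add_le_add_rpow ((p - q).toNNReal) (q.toNNReal) hγ0.le hγ1
    have h2 : ((p - q) + q) ^ γ ≤ (p - q) ^ γ + q ^ γ := by
      have h3 := NNReal.coe_le_coe.mpr h
      push_cast at h3
      rwa [Real.coe_toNNReal _ (by linarith : (0:ℝ) ≤ p - q),
        Real.coe_toNNReal _ hq] at h3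
    rw [sub_add_cancel] at h2
    linarith
  rcases le_total c a with h | h
  · rw [abs_of_nonneg (by simp [Real.rpow_le_rpow hc h hγ0.le] : (0:ℝ) ≤ a ^ γ - c ^ γ),
      abs_of_nonneg (by linarith)]
    exact key a c ha hc h
  · rw [abs_of_nonpos (by simp [Real.rpow_le_rpow ha h hγ0.le] : a ^ γ - c ^ γ ≤ 0),
      abs_of_nonpos (by linarith : a - c ≤ 0), neg_sub, neg_sub]
    exact key c a hc ha h


section Helpers

variable {k : ℕ} (V : Finset (Fin k)) (Nm : MonNorm k)

lemma vplus_lip (x z : Fin k → ℝ) (j : Fin k) :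
    |vplus V x j - vplus V z j| ≤ |x j - z j| := by
  unfold vplus
  by_cases h : j ∈ V
  · simp only [h, if_true]
    have := abs_max_sub_max_le_max (x j) 0 (z j) 0
    simpa using this
  · simp [h]

lemma vminus_lip (x z : Fin k → ℝ) (j : Fin k) :
    |vminus V x j - vminus V z j| ≤ |x j - z j| := by
  unfold vminus vplus
  by_cases h : j ∈ V
  · simp only [h, if_true, Pi.neg_apply]
    refine (abs_max_sub_max_le_max (-x j) 0 (-z j) 0).trans ?_
    rw [neg_sub_neg, abs_sub_comm (z j) (x j)]
    simp
  · simp only [h, if_false, Pi.neg_apply]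
    rw [neg_sub_neg, abs_sub_comm]

lemma holder_comp {γ C : ℝ} (hγ0 : 0 < γ) (hγ1 : γ ≤ 1) (hC : 0 ≤ C)
    (T : (Fin k → ℝ) → (Fin k → ℝ)) (hT : ∀ x z j, |T x j - T z j| ≤ |x j - z j|) :
    HolderW Nm.N γ C (fun y => C * Nm.N (T y) ^ γ) := by
  intro x z
  have h1 : |Nm.N (T x) - Nm.N (T z)| ≤ Nm.N (x - z) := by
    refine le_trans (Nm.abs_sub _ _) (Nm.mono _ _ ?_)
    intro j
    simpa [Pi.sub_apply, abs_abs] using hT x z j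
  calc |C * Nm.N (T x) ^ γ - C * Nm.N (T z) ^ γ|
      = C * |Nm.N (T x) ^ γ - Nm.N (T z) ^ γ| := by
        rw [← mul_sub, abs_mul, abs_of_nonneg hC]
    _ ≤ C * |Nm.N (T x) - Nm.N (T z)| ^ γ :=
        mul_le_mul_of_nonneg_left
          (rpow_abs_sub_le (Nm.nonneg _) (Nm.nonneg _) hγ0 hγ1) hC
    _ ≤ C * Nm.N (x - z) ^ γ := mul_le_mul_of_nonneg_left
        (Real.rpow_le_rpow (abs_nonneg _) h1 hγ0.le) hC

lemma mem_f1 {γ C : ℝ} (hγ0 : 0 < γ) (hγ1 : γ ≤ 1) (hC : 0 ≤ C) :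
    (fun y => C * Nm.N (vplus V y) ^ γ) ∈ Lam V Nm.N γ C := by
  refine ⟨holder_comp Nm hγ0 hγ1 hC _ (vplus_lip V), ?_⟩
  intro x z hV hoff
  have hle : Nm.N (vplus V z) ≤ Nm.N (vplus V x) := by
    refine Nm.mono _ _ fun j => ?_
    unfold vplus
    by_cases h : j ∈ V
    · simp only [h, if_true]
      rw [abs_of_nonneg (le_max_right _ _), abs_of_nonneg (le_max_right _ _)]
      exact max_le_max (hV j h) le_rfl
    · simp [h, hoff j h]
  exact mul_le_mul_of_nonneg_left
    (Real.rpow_le_rpow (Nm.nonneg _) hle hγ0.le) hC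

lemma mem_f2a {γ C b : ℝ} (hγ0 : 0 < γ) (hγ1 : γ ≤ 1) (hC : 0 ≤ C) :
    (fun y => b - C * Nm.N (vminus V y) ^ γ) ∈ Lam V Nm.N γ C := by
  constructor
  · intro x z
    have := holder_comp Nm hγ0 hγ1 hC _ (vminus_lip V) z x
    have heq : |b - C * Nm.N (vminus V x) ^ γ - (b - C * Nm.N (vminus V z) ^ γ)|
        = |C * Nm.N (vminus V z) ^ γ - C * Nm.N (vminus V x) ^ γ| := by
      congr 1; ring
    rw [heq]
    refine this.trans ?_
    have : Nm.N (z - x) = Nm.N (x - z) := by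
      rw [← Nm.neg (x - z)]; congr 1; abel
    rw [this]
  · intro x z hV hoff
    have hle : Nm.N (vminus V x) ≤ Nm.N (vminus V z) := by
      refine Nm.mono _ _ fun j => ?_
      unfold vminus vplus
      by_cases h : j ∈ V
      · simp only [h, if_true, Pi.neg_apply]
        rw [abs_of_nonneg (le_max_right _ _), abs_of_nonneg (le_max_right _ _)]
        exact max_le_max (neg_le_neg (hV j h)) le_rfl
      · simp [h, hoff j h]
    have h6 := mul_le_mul_of_nonneg_left
      (Real.rpow_le_rpow (Nm.nonneg _) hle hγ0.le) hC
    show b - C * Nm.N (vminus V z) ^ γ ≤ b - C * Nm.N (vminus V x) ^ γ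
    linarith

lemma mem_max {γ C : ℝ} {f g : (Fin k → ℝ) → ℝ}
    (hf : f ∈ Lam V Nm.N γ C) (hg : g ∈ Lam V Nm.N γ C) :
    (fun y => max (f y) (g y)) ∈ Lam V Nm.N γ C := by
  constructor
  · intro x z
    refine (abs_max_sub_max_le_max _ _ _ _).trans ?_
    exact max_le (hf.1 x z) (hg.1 x z)
  · intro x z hV hoff
    exact max_le_max (hf.2 x z hV hoff) (hg.2 x z hV hoff)

lemma key_ineq {γ₁ γ₂ C₁ C₂ b : ℝ} (hγ₁0 : 0 < γ₁) (hγ₂0 : 0 < γ₂)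
    (hC₁ : 0 ≤ C₁) (hC₂ : 0 ≤ C₂)
    {f₁ f₂ : (Fin k → ℝ) → ℝ}
    (hf₁ : f₁ ∈ Lam V Nm.N γ₁ C₁) (hf₂ : f₂ ∈ Lam V Nm.N γ₂ C₂)
    (h0 : f₂ 0 - f₁ 0 = b) (y : Fin k → ℝ) :
    b - C₁ * Nm.N (vplus V y) ^ γ₁ - C₂ * Nm.N (vminus V y) ^ γ₂ ≤ f₂ y - f₁ y := by
  have h1 : f₁ y ≤ f₁ (vplus V y) := by
    refine hf₁.2 (vplus V y) y (fun j hj => ?_) (fun j hj => ?_)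
    · simp [vplus, hj]
    · simp [vplus, hj]
  have h2 : f₁ (vplus V y) ≤ f₁ 0 + C₁ * Nm.N (vplus V y) ^ γ₁ := by
    have h := hf₁.1 (vplus V y) 0
    rw [sub_zero] at h
    have := le_abs_self (f₁ (vplus V y) - f₁ 0)
    linarith
  set zm : Fin k → ℝ := fun j => if j ∈ V then min (y j) 0 else y j with hzm
  have h3 : f₂ zm ≤ f₂ y := by
    refine hf₂.2 y zm (fun j hj => ?_) (fun j hj => ?_)
    · simp [hzm, hj]
    · simp [hzm, hj]
  have h4 : f₂ 0 - C₂ * Nm.N zm ^ γ₂ ≤ f₂ zm := by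
    have h := hf₂.1 zm 0
    rw [sub_zero] at h
    have := neg_abs_le (f₂ zm - f₂ 0)
    linarith
  have h5 : Nm.N zm ≤ Nm.N (vminus V y) := by
    refine Nm.mono _ _ fun j => ?_
    unfold vminus vplus
    by_cases h : j ∈ V
    · simp only [hzm, h, if_true, Pi.neg_apply]
      have : min (y j) 0 = -max (-y j) 0 := by
        rw [← neg_zero, max_neg_neg, neg_neg, neg_zero]
      rw [this, abs_neg]
    · simp [hzm, h]
  have h6 : C₂ * Nm.N zm ^ γ₂ ≤ C₂ * Nm.N (vminus V y) ^ γ₂ :=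
    mul_le_mul_of_nonneg_left (Real.rpow_le_rpow (Nm.nonneg _) h5 hγ₂0.le) hC₂
  linarith

end Helpers

/-- solution of the inverse ordered modulus problem
`ω⁻¹(b, Λ₊,V(γ₁,C₁), Λ₊,V(γ₂,C₂))`. -/
theorem stmt_4 {k : ℕ} (V : Finset (Fin k)) (Nm : MonNorm k)
    (γ₁ γ₂ C₁ C₂ b : ℝ)
    (hγ₂0 : 0 < γ₂) (hγ : γ₂ ≤ γ₁) (hγ₁1 : γ₁ ≤ 1)
    (hC₁ : 0 < C₁) (hC : C₁ ≤ C₂)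
    (hsub : Lam V Nm.N γ₁ C₁ ⊆ Lam V Nm.N γ₂ C₂)
    (hb : 0 < b)
    (n : ℕ) (x : Fin n → (Fin k → ℝ)) (σ : (Fin k → ℝ) → ℝ) (hσ : ∀ y, 0 < σ y) :
    (fun y => C₁ * Nm.N (vplus V y) ^ γ₁) ∈ Lam V Nm.N γ₁ C₁ ∧
    (fun y => max (b - C₂ * Nm.N (vminus V y) ^ γ₂) (C₁ * Nm.N (vplus V y) ^ γ₁)) ∈
      Lam V Nm.N γ₂ C₂ ∧
    (max (b - C₂ * Nm.N (vminus V (0 : Fin k → ℝ)) ^ γ₂)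
        (C₁ * Nm.N (vplus V (0 : Fin k → ℝ)) ^ γ₁)) -
      C₁ * Nm.N (vplus V (0 : Fin k → ℝ)) ^ γ₁ = b ∧
    (∀ f₁ ∈ Lam V Nm.N γ₁ C₁, ∀ f₂ ∈ Lam V Nm.N γ₂ C₂, f₂ 0 - f₁ 0 = b →
      ∑ i, (max (b - C₁ * Nm.N (vplus V (x i)) ^ γ₁ - C₂ * Nm.N (vminus V (x i)) ^ γ₂) 0
            / σ (x i)) ^ 2
        ≤ ∑ i, ((f₂ (x i) - f₁ (x i)) / σ (x i)) ^ 2) ∧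
    (∑ i, ((max (b - C₂ * Nm.N (vminus V (x i)) ^ γ₂) (C₁ * Nm.N (vplus V (x i)) ^ γ₁) -
            C₁ * Nm.N (vplus V (x i)) ^ γ₁) / σ (x i)) ^ 2
      = ∑ i, (max (b - C₁ * Nm.N (vplus V (x i)) ^ γ₁ - C₂ * Nm.N (vminus V (x i)) ^ γ₂) 0
            / σ (x i)) ^ 2) ∧
    (invMod n x σ b (Lam V Nm.N γ₁ C₁) (Lam V Nm.N γ₂ C₂)) ^ 2
      = ∑ i, (max (b - C₁ * Nm.N (vplus V (x i)) ^ γ₁ - C₂ * Nm.N (vminus V (x i)) ^ γ₂) 0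
            / σ (x i)) ^ 2 := by
  have hγ₁0 : 0 < γ₁ := lt_of_lt_of_le hγ₂0 hγ
  have hγ₂1 : γ₂ ≤ 1 := hγ.trans hγ₁1
  have hC₂0 : 0 < C₂ := lt_of_lt_of_le hC₁ hC
  -- part 1
  have p1 : (fun y => C₁ * Nm.N (vplus V y) ^ γ₁) ∈ Lam V Nm.N γ₁ C₁ :=
    mem_f1 V Nm hγ₁0 hγ₁1 hC₁.le
  -- part 2
  have p2 : (fun y => max (b - C₂ * Nm.N (vminus V y) ^ γ₂) (C₁ * Nm.N (vplus V y) ^ γ₁)) ∈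
      Lam V Nm.N γ₂ C₂ :=
    mem_max V Nm (mem_f2a V Nm hγ₂0 hγ₂1 hC₂0.le) (hsub p1)
  -- part 3
  have hv0 : vplus V (0 : Fin k → ℝ) = 0 := by
    funext j; simp [vplus]
  have hvm0 : vminus V (0 : Fin k → ℝ) = 0 := by
    funext j; simp [vminus, vplus]
  have hN0 : Nm.N 0 = 0 := (Nm.eq_zero_iff 0).mpr rfl
  have p3 : (max (b - C₂ * Nm.N (vminus V (0 : Fin k → ℝ)) ^ γ₂)
        (C₁ * Nm.N (vplus V (0 : Fin k → ℝ)) ^ γ₁)) -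
      C₁ * Nm.N (vplus V (0 : Fin k → ℝ)) ^ γ₁ = b := by
    rw [hv0, hvm0, hN0, Real.zero_rpow hγ₁0.ne', Real.zero_rpow hγ₂0.ne']
    simp [max_eq_left hb.le]
  -- part 4
  have p4 : ∀ f₁ ∈ Lam V Nm.N γ₁ C₁, ∀ f₂ ∈ Lam V Nm.N γ₂ C₂, f₂ 0 - f₁ 0 = b →
      ∑ i, (max (b - C₁ * Nm.N (vplus V (x i)) ^ γ₁ - C₂ * Nm.N (vminus V (x i)) ^ γ₂) 0
            / σ (x i)) ^ 2
        ≤ ∑ i, ((f₂ (x i) - f₁ (x i)) / σ (x i)) ^ 2 := by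
    intro f₁ hf₁ f₂ hf₂ h0
    refine Finset.sum_le_sum fun i _ => ?_
    set t := b - C₁ * Nm.N (vplus V (x i)) ^ γ₁ - C₂ * Nm.N (vminus V (x i)) ^ γ₂ with ht
    have hk : t ≤ f₂ (x i) - f₁ (x i) :=
      key_ineq V Nm hγ₁0 hγ₂0 hC₁.le hC₂0.le hf₁ hf₂ h0 (x i)
    have hmax : max t 0 ≤ |f₂ (x i) - f₁ (x i)| :=
      max_le (hk.trans (le_abs_self _)) (abs_nonneg _)
    have hsq : (max t 0) ^ 2 ≤ (f₂ (x i) - f₁ (x i)) ^ 2 := by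
      calc (max t 0) ^ 2 ≤ |f₂ (x i) - f₁ (x i)| ^ 2 :=
            pow_le_pow_left₀ (le_max_right _ _) hmax 2
        _ = (f₂ (x i) - f₁ (x i)) ^ 2 := sq_abs _
    rw [div_pow, div_pow]
    exact (div_le_div_iff_of_pos_right (pow_pos (hσ _) 2)).mpr hsq
  -- part 5
  have p5 : ∑ i, ((max (b - C₂ * Nm.N (vminus V (x i)) ^ γ₂) (C₁ * Nm.N (vplus V (x i)) ^ γ₁) -
            C₁ * Nm.N (vplus V (x i)) ^ γ₁) / σ (x i)) ^ 2
      = ∑ i, (max (b - C₁ * Nm.N (vplus V (x i)) ^ γ₁ - C₂ * Nm.N (vminus V (x i)) ^ γ₂) 0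
            / σ (x i)) ^ 2 := by
    refine Finset.sum_congr rfl fun i _ => ?_
    congr 2
    have hmv : ∀ u v : ℝ, max u v - v = max (u - v) 0 := by
      intro u v
      rcases le_total u v with h | h
      · rw [max_eq_right h, max_eq_right (by linarith : u - v ≤ 0), sub_self]
      · rw [max_eq_left h, max_eq_left (by linarith : (0:ℝ) ≤ u - v)]
    rw [hmv]
    congr 1
    ring
  refine ⟨p1, p2, p3, p4, p5, ?_⟩
  -- part 6
  set S := ∑ i, (max (b - C₁ * Nm.N (vplus V (x i)) ^ γ₁ - C₂ * Nm.N (vminus V (x i)) ^ γ₂) 0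
            / σ (x i)) ^ 2 with hS
  have hS0 : 0 ≤ S := Finset.sum_nonneg fun i _ => sq_nonneg _
  set T := {r : ℝ | ∃ f ∈ Lam V Nm.N γ₁ C₁, ∃ g ∈ Lam V Nm.N γ₂ C₂, g 0 - f 0 = b ∧
    r = Real.sqrt (∑ i, ((g (x i) - f (x i)) / σ (x i)) ^ 2)} with hT
  have hmem : Real.sqrt S ∈ T := by
    refine ⟨_, p1, _, p2, p3, ?_⟩
    exact congrArg Real.sqrt p5.symm
  have hlb : ∀ r ∈ T, Real.sqrt S ≤ r := by
    rintro r ⟨f, hf, g, hg, h0, rfl⟩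
    exact Real.sqrt_le_sqrt (p4 f hf g hg h0)
  have hinf : invMod n x σ b (Lam V Nm.N γ₁ C₁) (Lam V Nm.N γ₂ C₂) = Real.sqrt S := by
    refine le_antisymm (csInf_le ⟨Real.sqrt S, hlb⟩ hmem) (le_csInf ⟨_, hmem⟩ hlb)
  rw [hinf, Real.sq_sqrt hS0]
end

section
/- Let α ∈ (0,1/2) and J ≥ 1. Let F₁,…,F_J be nonempty convex classes of functions ℝ^k → ℝ with F_j ⊆ F_J for every j, let L be a linear functional defined on a vector space of functions containing F_J, and fix design points x₁,…,x_n ∈ ℝ^k and σ : ℝ^k → (0,∞). Suppose {P_f : f ∈ F_J} is a family of probability measures and, for each j = 1,…,J, ĉ^{ℓ,j} is an integrable random variable satisfying sup_{f∈F_j} E_{P_f}[Lf − ĉ^{ℓ,j}] ≤ ω(z_{1−α/J}, F_J, F_j). Then for every j = 1,…,J, the combined lower endpoint ĉ := max_{1≤ℓ≤J} ĉ^{ℓ,ℓ} satisfies sup_{f∈F_j} E_{P_f}[Lf − ĉ] ≤ (z_{1−α/J}/z_{1−α}) · ω(z_{1−α}, F_J, F_j). -/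
open MeasureTheory Filter Finset

/-- The `q`-quantile of the standard normal distribution. -/
noncomputable def gaussQuantile (q : ℝ) : ℝ :=
  sInf {t : ℝ | q ≤ ((ProbabilityTheory.gaussianReal 0 1) (Set.Iic t)).toReal}

/-- Ordered modulus of continuity for a linear functional `L` with noise scale `σ`. -/
noncomputable def ordModL {k : ℕ} (n : ℕ) (x : Fin n → (Fin k → ℝ))
    (σ : (Fin k → ℝ) → ℝ) (L : ((Fin k → ℝ) → ℝ) →ₗ[ℝ] ℝ) (δ : ℝ)
    (F G : Set ((Fin k → ℝ) → ℝ)) : ℝ :=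
  sSup {d : ℝ | ∃ f ∈ F, ∃ g ∈ G,
    (∑ i, ((g (x i) - f (x i)) / σ (x i)) ^ 2) ≤ δ ^ 2 ∧ d = L g - L f}

/-!
The combined lower endpoint dominates each `ĉ^{j,j}`, so its expected excess length over `F_j`
is at most `ω(z_{1−α/J}, F_J, F_j)`. Because `F_J` is convex and contains `F_j`, shrinking a
pair `(f, g)` towards `g` by the factor `λ = δ₁/δ₂` scales both the distance and `Lg − Lf` by `λ`;
hence `ω(δ₂) ≤ (δ₂/δ₁) ω(δ₁)` for `δ₁ ≤ δ₂`, applied with `δ₁ = z_{1−α} ≤ z_{1−α/J} = δ₂`.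
-/

open ProbabilityTheory

namespace StieltjesFunction

lemma le_apply_sInf_setOf_le (f : StieltjesFunction ℝ) {q : ℝ}
    (hne : {t | q ≤ f t}.Nonempty) :
    q ≤ f (sInf {t | q ≤ f t}) := by
  refine ge_of_tendsto ((f.right_continuous _).tendsto.mono_left
    (nhdsWithin_mono _ Set.Ioi_subset_Ici_self)) ?_
  filter_upwards [self_mem_nhdsWithin] with t ht
  obtain ⟨s, hs, hst⟩ := exists_lt_of_csInf_lt hne ht
  exact hs.trans (f.mono hst.le)

end StieltjesFunction

lemma bddBelow_setOf_le_cdf (μ : Measure ℝ) {q : ℝ} (hq : 0 < q) :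
    BddBelow {t | q ≤ cdf μ t} := by
  obtain ⟨a, ha⟩ := eventually_atBot.mp ((tendsto_cdf_atBot μ).eventually (gt_mem_nhds hq))
  exact ⟨a, fun t ht => le_of_not_gt fun hta => (ha t hta.le).not_ge ht⟩

lemma nonempty_setOf_le_cdf (μ : Measure ℝ) {q : ℝ} (hq : q < 1) :
    {t | q ≤ cdf μ t}.Nonempty :=
  ((tendsto_cdf_atTop μ).eventually (eventually_ge_nhds hq)).exists

lemma cdf_gaussianReal_zero {v : NNReal} (hv : v ≠ 0) : cdf (gaussianReal 0 v) 0 = 1 / 2 := by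
  have := nullSingletonClass_gaussianReal (μ := 0) hv
  have hneg : (gaussianReal 0 v).map (fun x => -x) = gaussianReal 0 v := by
    simpa using gaussianReal_map_neg (μ := 0) (v := v)
  have hsymm : (gaussianReal 0 v).real (Set.Ici 0) = (gaussianReal 0 v).real (Set.Iic 0) := by
    conv_lhs => rw [← hneg]
    rw [map_measureReal_apply measurable_neg measurableSet_Ici]
    exact congrArg _ (Set.neg_Ici 0 |>.trans (by rw [neg_zero]))
  have hsplit := measureReal_union_add_inter (μ := gaussianReal 0 v) (s := Set.Iic (0 : ℝ))
    (measurableSet_Ici (a := (0 : ℝ)))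
  rw [Set.Iic_union_Ici, Set.Iic_inter_Ici, Set.Icc_self, probReal_univ,
    measureReal_def, measure_singleton, ENNReal.toReal_zero, hsymm] at hsplit
  rw [cdf_eq_real]
  linarith

lemma gaussQuantile_eq_sInf (q : ℝ) :
    gaussQuantile q = sInf {t | q ≤ cdf (gaussianReal 0 1) t} := by
  simp only [gaussQuantile, cdf_eq_real, measureReal_def]

lemma le_cdf_gaussQuantile {q : ℝ} (hq : q < 1) :
    q ≤ cdf (gaussianReal 0 1) (gaussQuantile q) := by
  rw [gaussQuantile_eq_sInf]
  exact (cdf _).le_apply_sInf_setOf_le (nonempty_setOf_le_cdf _ hq)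

lemma gaussQuantile_pos {q : ℝ} (hq0 : 1 / 2 < q) (hq1 : q < 1) : 0 < gaussQuantile q := by
  by_contra! hle
  have := (le_cdf_gaussQuantile hq1).trans (monotone_cdf _ hle)
  rw [cdf_gaussianReal_zero one_ne_zero] at this
  linarith

lemma gaussQuantile_monotoneOn : MonotoneOn gaussQuantile (Set.Ioo 0 1) := by
  intro q hq q' hq' hqq'
  rw [gaussQuantile_eq_sInf, gaussQuantile_eq_sInf]
  exact csInf_le_csInf (bddBelow_setOf_le_cdf _ hq.1) (nonempty_setOf_le_cdf _ hq'.2)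
    fun t ht => hqq'.trans ht

section OrderedModulus

variable {k n : ℕ} {x : Fin n → (Fin k → ℝ)} {σ : (Fin k → ℝ) → ℝ}
  {L : ((Fin k → ℝ) → ℝ) →ₗ[ℝ] ℝ} {F G : Set ((Fin k → ℝ) → ℝ)}

variable (n x σ L) in
def ordModSet (δ : ℝ) (F G : Set ((Fin k → ℝ) → ℝ)) : Set ℝ :=
  {d : ℝ | ∃ f ∈ F, ∃ g ∈ G,
    (∑ i, ((g (x i) - f (x i)) / σ (x i)) ^ 2) ≤ δ ^ 2 ∧ d = L g - L f}

lemma ordModL_eq_sSup (δ : ℝ) : ordModL n x σ L δ F G = sSup (ordModSet n x σ L δ F G) := rfl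

lemma zero_mem_ordModSet (hG : G.Nonempty) (hGF : G ⊆ F) (δ : ℝ) :
    0 ∈ ordModSet n x σ L δ F G := by
  obtain ⟨g, hg⟩ := hG
  exact ⟨g, hGF hg, g, hg, by simpa using sq_nonneg δ, (sub_self _).symm⟩

lemma ordModSet_mono {δ₁ δ₂ : ℝ} (h0 : 0 ≤ δ₁) (h12 : δ₁ ≤ δ₂) :
    ordModSet n x σ L δ₁ F G ⊆ ordModSet n x σ L δ₂ F G := by
  rintro d ⟨f, hf, g, hg, hsum, hd⟩
  exact ⟨f, hf, g, hg, hsum.trans (pow_le_pow_left₀ h0 h12 2), hd⟩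

/-- Replacing `f` by `λ f + (1 - λ) g` scales both `g - f` and `L g - L f` by `λ`. -/
lemma mul_mem_ordModSet (hF : Convex ℝ F) (hGF : G ⊆ F) {lam δ d : ℝ}
    (hlam0 : 0 ≤ lam) (hlam1 : lam ≤ 1) (hd : d ∈ ordModSet n x σ L δ F G) :
    lam * d ∈ ordModSet n x σ L (lam * δ) F G := by
  obtain ⟨f, hf, g, hg, hsum, rfl⟩ := hd
  refine ⟨lam • f + (1 - lam) • g, hF hf (hGF hg) hlam0 (by linarith) (by ring), g, hg, ?_, ?_⟩
  · have hterm : ∀ i, ((g (x i) - (lam • f + (1 - lam) • g) (x i)) / σ (x i)) ^ 2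
        = lam ^ 2 * ((g (x i) - f (x i)) / σ (x i)) ^ 2 := fun i => by
      simp only [Pi.add_apply, Pi.smul_apply, smul_eq_mul]
      ring
    simp only [hterm, ← Finset.mul_sum, mul_pow]
    exact mul_le_mul_of_nonneg_left hsum (sq_nonneg lam)
  · simp only [map_add, map_smul, smul_eq_mul]
    ring

lemma ordModL_le_div_mul (hG : G.Nonempty) (hF : Convex ℝ F) (hGF : G ⊆ F) {δ₁ δ₂ : ℝ}
    (h1 : 0 < δ₁) (h12 : δ₁ ≤ δ₂) :
    ordModL n x σ L δ₂ F G ≤ δ₂ / δ₁ * ordModL n x σ L δ₁ F G := by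
  have h2 : 0 < δ₂ := h1.trans_le h12
  rw [ordModL_eq_sSup, ordModL_eq_sSup]
  by_cases hbdd : BddAbove (ordModSet n x σ L δ₁ F G)
  · refine csSup_le ⟨0, zero_mem_ordModSet hG hGF δ₂⟩ fun d hd => ?_
    have hscaled : δ₁ / δ₂ * d ≤ sSup (ordModSet n x σ L δ₁ F G) := by
      refine le_csSup hbdd ?_
      have := mul_mem_ordModSet hF hGF (div_nonneg h1.le h2.le) ((div_le_one h2).mpr h12) hd
      rwa [div_mul_cancel₀ _ h2.ne'] at this
    calc d = δ₂ / δ₁ * (δ₁ / δ₂ * d) := by field_simp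
      _ ≤ δ₂ / δ₁ * sSup (ordModSet n x σ L δ₁ F G) := by gcongr
  · have hbdd₂ : ¬BddAbove (ordModSet n x σ L δ₂ F G) :=
      fun h => hbdd (h.mono (ordModSet_mono h1.le h12))
    simp [Real.sSup_of_not_bddAbove hbdd, Real.sSup_of_not_bddAbove hbdd₂]

end OrderedModulus

lemma MeasureTheory.Integrable.finset_sup' {Ω ι : Type*} [MeasurableSpace Ω] {μ : Measure Ω}
    {s : Finset ι} (hs : s.Nonempty) {X : ι → Ω → ℝ} (hX : ∀ i ∈ s, Integrable (X i) μ) :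
    Integrable (fun ω => s.sup' hs fun i => X i ω) μ := by
  simpa only [← Finset.sup'_apply] using
    Finset.sup'_induction hs X (p := fun g => Integrable g μ) (fun _ hf _ hg => hf.sup hg) hX

lemma integral_const_sub_sup'_le {Ω ι : Type*} [MeasurableSpace Ω] {μ : Measure Ω}
    [IsFiniteMeasure μ] (c : ℝ) {s : Finset ι} (hs : s.Nonempty) {X : ι → Ω → ℝ}
    (hX : ∀ i ∈ s, Integrable (X i) μ) {j : ι} (hj : j ∈ s) :
    ∫ ω, (c - s.sup' hs fun i => X i ω) ∂μ ≤ ∫ ω, (c - X j ω) ∂μ :=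
  integral_mono ((integrable_const c).sub (.finset_sup' hs hX))
    ((integrable_const c).sub (hX j hj)) fun ω => sub_le_sub_left (le_sup' (X · ω) hj) c

theorem stmt_8_general {k : ℕ} (Ω : Type*) [MeasurableSpace Ω]
    (J : ℕ) (α : ℝ) (hα0 : 0 < α) (hα1 : α < 1 / 2)
    (F : Fin J → Set ((Fin k → ℝ) → ℝ)) (jJ : Fin J)
    (hne : ∀ j, (F j).Nonempty) (hconv : ∀ j, Convex ℝ (F j))
    (hsub : ∀ j, F j ⊆ F jJ)
    (L : ((Fin k → ℝ) → ℝ) →ₗ[ℝ] ℝ)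
    (n : ℕ) (x : Fin n → (Fin k → ℝ)) (σ : (Fin k → ℝ) → ℝ)
    (P : ((Fin k → ℝ) → ℝ) → Measure Ω)
    (hP : ∀ f ∈ F jJ, IsProbabilityMeasure (P f))
    (cl : Fin J → Ω → ℝ)
    (hint : ∀ j, ∀ f ∈ F jJ, Integrable (cl j) (P f))
    (hlo : ∀ j, ∀ f ∈ F j,
      ∫ ω, (L f - cl j ω) ∂(P f)
        ≤ ordModL n x σ L (gaussQuantile (1 - α / J)) (F jJ) (F j)) :
    ∀ j, ∀ f ∈ F j,
      ∫ ω, (L f - Finset.univ.sup' ⟨jJ, Finset.mem_univ jJ⟩ fun ℓ => cl ℓ ω) ∂(P f)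
        ≤ gaussQuantile (1 - α / J) / gaussQuantile (1 - α) *
            ordModL n x σ L (gaussQuantile (1 - α)) (F jJ) (F j) := by
  intro j f hf
  have hfJ : f ∈ F jJ := hsub j hf
  have := hP f hfJ
  have hJ : (1 : ℝ) ≤ J := Nat.one_le_cast.mpr jJ.pos
  have hαJ0 : 0 < α / J := div_pos hα0 (by linarith)
  have hαJ : α / J ≤ α := div_le_self hα0.le hJ
  have hz : 0 < gaussQuantile (1 - α) := gaussQuantile_pos (by linarith) (by linarith)
  have hzz : gaussQuantile (1 - α) ≤ gaussQuantile (1 - α / J) :=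
    gaussQuantile_monotoneOn ⟨by linarith, by linarith⟩ ⟨by linarith, by linarith⟩ (by linarith)
  calc _ ≤ ∫ ω, (L f - cl j ω) ∂(P f) :=
        integral_const_sub_sup'_le _ _ (fun i _ => hint i f hfJ) (mem_univ j)
    _ ≤ ordModL n x σ L (gaussQuantile (1 - α / J)) (F jJ) (F j) := hlo j f hf
    _ ≤ _ := ordModL_le_div_mul (hne j) (hconv jJ) (hsub j) hz hzz

/-- the adaptive one-sided lower CI `ĉ := max_ℓ ĉ^{ℓ,ℓ}` obtained from
the `J` one-sided lower CIs with level `α/J` has worst-case expected excess length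
over `F_j` bounded by `(z_{1−α/J}/z_{1−α}) ω(z_{1−α}, F_J, F_j)`. -/
theorem stmt_8 {k : ℕ} (Ω : Type*) [MeasurableSpace Ω]
    (J : ℕ) (hJ : 0 < J) (α : ℝ) (hα0 : 0 < α) (hα1 : α < 1 / 2)
    (F : Fin J → Set ((Fin k → ℝ) → ℝ)) (jJ : Fin J)
    (hne : ∀ j, (F j).Nonempty) (hconv : ∀ j, Convex ℝ (F j))
    (hsub : ∀ j, F j ⊆ F jJ)
    (L : ((Fin k → ℝ) → ℝ) →ₗ[ℝ] ℝ)
    (n : ℕ) (x : Fin n → (Fin k → ℝ)) (σ : (Fin k → ℝ) → ℝ) (hσ : ∀ y, 0 < σ y)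
    (P : ((Fin k → ℝ) → ℝ) → Measure Ω)
    (hP : ∀ f ∈ F jJ, IsProbabilityMeasure (P f))
    (cl : Fin J → Ω → ℝ)
    (hint : ∀ j, ∀ f ∈ F jJ, Integrable (cl j) (P f))
    (hlo : ∀ j, ∀ f ∈ F j,
      ∫ ω, (L f - cl j ω) ∂(P f)
        ≤ ordModL n x σ L (gaussQuantile (1 - α / J)) (F jJ) (F j)) :
    ∀ j, ∀ f ∈ F j,
      ∫ ω, (L f - Finset.univ.sup' ⟨jJ, Finset.mem_univ jJ⟩ fun ℓ => cl ℓ ω) ∂(P f)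
        ≤ gaussQuantile (1 - α / J) / gaussQuantile (1 - α) *
            ordModL n x σ L (gaussQuantile (1 - α)) (F jJ) (F j) :=
  stmt_8_general Ω J α hα0 hα1 F jJ hne hconv hsub L n x σ P hP cl hint hlo
end

section
/- Suppose the norm ‖·‖ on ℝ^k satisfies Assumption 1, 0 < γ₂ ≤ γ₁ ≤ 1, and C₁, C₂ > 0; set k₊ := |V|. Then there exists a constant c₊ = c₊(C₁,C₂) ∈ (0,∞) such that lim_{b→0⁺} b^{−(k₊/γ₁ + (k−k₊)/γ₂)} ∫_{ℝ^k} ( 1 − (C₁/b)‖(x)_{V+}‖^{γ₁} − (C₂/b)‖(x)_{V−}‖^{γ₂} )₊² dx = c₊, where the integral is with respect to Lebesgue measure on ℝ^k. -/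
open MeasureTheory Filter Finset

/-!
The substitution `x_j = b^{1/γ₁} y_j` for `j ∈ V`, `x_j = b^{1/γ₂} y_j` for `j ∉ V` has Jacobian
`b^{k₊/γ₁ + (k-k₊)/γ₂}` and turns the normalized integral into `∫ rescaledIntegrand s` with
`s = b^{1/γ₂ - 1/γ₁} ∈ (0, 1]`. If `γ₁ = γ₂` then `s = 1` and nothing depends on `b`. Otherwise
`s → 0⁺`: by Assumption 1 every coordinate of `y` is controlled by the two norms, so the integrands
are bounded by the indicator of a fixed ball and dominated convergence applies; the limit vanishes
wherever a `V`-coordinate is negative, since that coordinate enters the second norm multiplied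
by `s⁻¹`. The limit is positive because on a small cube in the nonnegative orthant both norms are
small, uniformly in `s`.
-/

namespace MonNorm

variable {k : ℕ} (Nm : MonNorm k)

lemma N_zero : Nm.N 0 = 0 := (Nm.eq_zero_iff 0).2 rfl

lemma N_neg (x : Fin k → ℝ) : Nm.N (-x) = Nm.N x := by
  simpa using Nm.smul_eq (-1) x

lemma N_nonneg (x : Fin k → ℝ) : 0 ≤ Nm.N x := by
  have h := Nm.add_le x (-x)
  rw [add_neg_cancel, N_zero, N_neg] at h
  linarith

lemma N_pos {x : Fin k → ℝ} (hx : x ≠ 0) : 0 < Nm.N x :=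
  (Nm.N_nonneg x).lt_of_ne' (mt (Nm.eq_zero_iff x).1 hx)

lemma abs_N_sub_N_le (x y : Fin k → ℝ) : |Nm.N x - Nm.N y| ≤ Nm.N (x - y) := by
  have hx := Nm.add_le (x - y) y
  have hy := Nm.add_le (y - x) x
  rw [sub_add_cancel] at hx hy
  rw [← neg_sub, N_neg] at hy
  exact abs_sub_le_iff.2 ⟨by linarith, by linarith⟩

lemma N_le_of_abs_le_add {z u w : Fin k → ℝ} (h : ∀ j, |z j| ≤ |u j| + |w j|) :
    Nm.N z ≤ Nm.N u + Nm.N w := by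
  have habs (v : Fin k → ℝ) : Nm.N (fun j => |v j|) ≤ Nm.N v := Nm.mono _ _ fun j => by simp
  calc Nm.N z ≤ Nm.N ((fun j => |u j|) + fun j => |w j|) :=
        Nm.mono _ _ fun j => (h j).trans (le_abs_self _)
    _ ≤ Nm.N u + Nm.N w := (Nm.add_le _ _).trans (add_le_add (habs u) (habs w))

lemma N_le_mul_norm (z : Fin k → ℝ) : Nm.N z ≤ Nm.N 1 * ‖z‖ := by
  calc Nm.N z ≤ Nm.N (‖z‖ • 1) :=
        Nm.mono _ _ fun j => by simpa using norm_le_pi_norm z j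
    _ = Nm.N 1 * ‖z‖ := by rw [Nm.smul_eq, abs_norm, mul_comm]

lemma norm_le_mul_N (z : Fin k → ℝ) :
    ‖z‖ ≤ (∑ j, (Nm.N (Pi.single j 1))⁻¹) * Nm.N z := by
  have hinv (j : Fin k) : 0 ≤ (Nm.N (Pi.single j 1))⁻¹ := inv_nonneg.2 (Nm.N_nonneg _)
  refine (pi_norm_le_iff_of_nonneg (mul_nonneg (Finset.sum_nonneg fun j _ => hinv j)
    (Nm.N_nonneg z))).2 fun j => ?_
  have hj : 0 < Nm.N (Pi.single j 1) := Nm.N_pos (by simp)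
  have hcoord : |z j| * Nm.N (Pi.single j 1) ≤ Nm.N z := by
    calc |z j| * Nm.N (Pi.single j 1) = Nm.N (z j • Pi.single j 1) := by rw [Nm.smul_eq]
      _ ≤ Nm.N z := Nm.mono _ _ fun i => by
        rcases eq_or_ne i j with rfl | h <;> simp [*]
  calc ‖z j‖ ≤ (Nm.N (Pi.single j 1))⁻¹ * Nm.N z := by
        rw [Real.norm_eq_abs, inv_mul_eq_div, le_div_iff₀ hj]; exact hcoord
    _ ≤ _ := mul_le_mul_of_nonneg_right
        (Finset.single_le_sum (fun i _ => hinv i) (Finset.mem_univ j)) (Nm.N_nonneg z)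

lemma continuous_N : Continuous Nm.N :=
  (LipschitzWith.of_dist_le' (K := Nm.N 1) fun x y => by
    rw [Real.dist_eq, dist_eq_norm]
    exact (Nm.abs_N_sub_N_le x y).trans (Nm.N_le_mul_norm _)).continuous

end MonNorm

theorem integral_comp_mul_pi {ι E : Type*} [Fintype ι] [NormedAddCommGroup E] [NormedSpace ℝ E]
    (c : ι → ℝ) (hc : ∀ i, c i ≠ 0) (f : (ι → ℝ) → E) :
    ∫ y : ι → ℝ, f (fun i => c i * y i) = |∏ i, c i|⁻¹ • ∫ x, f x := by
  classical
  set L := Matrix.toLin' (Matrix.diagonal c)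
  have hL : ⇑L = fun (y : ι → ℝ) i => c i * y i := by
    ext y i; simp [L, Matrix.mulVec_diagonal]
  have hdet : LinearMap.det L = ∏ i, c i := by simp [L, Matrix.det_diagonal]
  have hemb : MeasurableEmbedding L := by
    refine (LinearMap.continuous_on_pi L).measurableEmbedding fun y z h => ?_
    rw [hL] at h
    exact funext fun i => mul_left_cancel₀ (hc i) (congrFun h i)
  have hdet0 : LinearMap.det L ≠ 0 := hdet ▸ Finset.prod_ne_zero_iff.2 fun i _ => hc i
  calc ∫ y : ι → ℝ, f (fun i => c i * y i) = ∫ y, f (L y) := by rw [hL]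
    _ = |∏ i, c i|⁻¹ • ∫ x, f x := by
      rw [← hemb.integral_map, Real.map_linearMap_volume_pi_eq_smul_volume_pi hdet0,
        integral_smul_measure, hdet, ENNReal.toReal_ofReal (abs_nonneg _), abs_inv]

noncomputable def profile (γ₁ γ₂ C₁ C₂ u v : ℝ) : ℝ := (max (1 - C₁ * u ^ γ₁ - C₂ * v ^ γ₂) 0) ^ 2

section Profile

variable {γ₁ γ₂ C₁ C₂ : ℝ}

lemma profile_nonneg (u v : ℝ) : 0 ≤ profile γ₁ γ₂ C₁ C₂ u v := sq_nonneg _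

lemma profile_le_one (hC₁ : 0 ≤ C₁) (hC₂ : 0 ≤ C₂) {u v : ℝ} (hu : 0 ≤ u) (hv : 0 ≤ v) :
    profile γ₁ γ₂ C₁ C₂ u v ≤ 1 := by
  have h₁ : 0 ≤ C₁ * u ^ γ₁ := by positivity
  have h₂ : 0 ≤ C₂ * v ^ γ₂ := by positivity
  exact pow_le_one₀ (le_max_right _ _) (max_le (by linarith) zero_le_one)

lemma profile_le_profile (hC₁ : 0 ≤ C₁) (hC₂ : 0 ≤ C₂) (hγ₁ : 0 ≤ γ₁) (hγ₂ : 0 ≤ γ₂) {u u' v v' : ℝ}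
    (hu : 0 ≤ u) (hv : 0 ≤ v) (huu' : u ≤ u') (hvv' : v ≤ v') :
    profile γ₁ γ₂ C₁ C₂ u' v' ≤ profile γ₁ γ₂ C₁ C₂ u v := by
  unfold profile
  gcongr

lemma profile_zero_zero (hγ₁ : 0 < γ₁) (hγ₂ : 0 < γ₂) : profile γ₁ γ₂ C₁ C₂ 0 0 = 1 := by
  simp [profile, Real.zero_rpow hγ₁.ne', Real.zero_rpow hγ₂.ne']

lemma profile_div_mul {b t₁ t₂ u v : ℝ} (hb : b ≠ 0) (ht₁ : 0 ≤ t₁) (ht₂ : 0 ≤ t₂) (hu : 0 ≤ u)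
    (hv : 0 ≤ v) (h₁ : t₁ ^ γ₁ = b) (h₂ : t₂ ^ γ₂ = b) :
    profile γ₁ γ₂ (C₁ / b) (C₂ / b) (t₁ * u) (t₂ * v) = profile γ₁ γ₂ C₁ C₂ u v := by
  simp only [profile, Real.mul_rpow ht₁ hu, Real.mul_rpow ht₂ hv, h₁, h₂]
  field_simp

lemma le_of_profile_ne_zero (hC₁ : 0 < C₁) (hC₂ : 0 < C₂) (hγ₁ : 0 < γ₁) (hγ₂ : 0 < γ₂)
    {u v : ℝ} (hu : 0 ≤ u) (hv : 0 ≤ v) (h : profile γ₁ γ₂ C₁ C₂ u v ≠ 0) :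
    u ≤ C₁⁻¹ ^ γ₁⁻¹ ∧ v ≤ C₂⁻¹ ^ γ₂⁻¹ := by
  have hpos : 0 < 1 - C₁ * u ^ γ₁ - C₂ * v ^ γ₂ := by
    by_contra! hle
    exact h (by simp [profile, max_eq_right hle])
  have h₁ : 0 ≤ C₁ * u ^ γ₁ := by positivity
  have h₂ : 0 ≤ C₂ * v ^ γ₂ := by positivity
  rw [Real.le_rpow_inv_iff_of_pos hu (by positivity) hγ₁,
    Real.le_rpow_inv_iff_of_pos hv (by positivity) hγ₂, ← one_div, ← one_div, le_div_iff₀' hC₁,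
    le_div_iff₀' hC₂]
  constructor <;> linarith

lemma Continuous.profile {X : Type*} [TopologicalSpace X] (hγ₁ : 0 ≤ γ₁) (hγ₂ : 0 ≤ γ₂)
    {f g : X → ℝ} (hf : Continuous f) (hg : Continuous g) :
    Continuous fun x => profile γ₁ γ₂ C₁ C₂ (f x) (g x) := by
  unfold _root_.profile
  have := hf.rpow_const fun _ => Or.inr hγ₁
  have := hg.rpow_const fun _ => Or.inr hγ₂
  fun_prop

end Profile

section Rescaling

variable {k : ℕ} (V : Finset (Fin k))

def posPartOn (y : Fin k → ℝ) : Fin k → ℝ := fun j => if j ∈ V then max (y j) 0 else 0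

def offPart (y : Fin k → ℝ) : Fin k → ℝ := fun j => if j ∈ V then 0 else y j

lemma continuous_posPartOn : Continuous (posPartOn V) :=
  continuous_pi fun j => by unfold posPartOn; split_ifs <;> fun_prop

lemma continuous_offPart : Continuous (offPart V) :=
  continuous_pi fun j => by unfold offPart; split_ifs <;> fun_prop

variable {V}

lemma vplus_mul_scale {t₁ t₂ : ℝ} (ht₁ : 0 < t₁) (y : Fin k → ℝ) :
    vplus V (fun j => (if j ∈ V then t₁ else t₂) * y j) =
      t₁ • (posPartOn V y + (t₂ / t₁) • offPart V y) := by
  ext j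
  by_cases hj : j ∈ V
  · simp [vplus, posPartOn, offPart, hj, mul_max_of_nonneg _ _ ht₁.le]
  · simp [vplus, posPartOn, offPart, hj]
    field_simp

lemma vminus_mul_scale {t₁ t₂ : ℝ} (ht₁ : 0 < t₁) (ht₂ : 0 < t₂) (y : Fin k → ℝ) :
    vminus V (fun j => (if j ∈ V then t₁ else t₂) * y j) =
      t₂ • ((t₂ / t₁)⁻¹ • posPartOn V (-y) + offPart V (-y)) := by
  ext j
  by_cases hj : j ∈ V
  · simp [vminus, vplus, posPartOn, offPart, hj, ← mul_assoc, mul_div_cancel₀ _ ht₂.ne',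
      mul_max_of_nonneg _ _ ht₁.le]
  · simp [vminus, vplus, posPartOn, offPart, hj]

end Rescaling

section Integrand

variable {k : ℕ} (V : Finset (Fin k)) (Nm : MonNorm k) (γ₁ γ₂ C₁ C₂ : ℝ)

/-- The integrand of the theorem after the substitution `x_j = b^{1/γ₁} y_j` for `j ∈ V`,
`x_j = b^{1/γ₂} y_j` for `j ∉ V`, written in terms of `s = b^{1/γ₂ - 1/γ₁}`. -/
noncomputable def rescaledIntegrand (s : ℝ) (y : Fin k → ℝ) : ℝ :=
  profile γ₁ γ₂ C₁ C₂ (Nm.N (posPartOn V y + s • offPart V y))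
    (Nm.N (s⁻¹ • posPartOn V (-y) + offPart V (-y)))

variable {V γ₁ γ₂}

lemma profile_comp_mul_scale {b : ℝ} (hb : 0 < b) (hγ₁ : 0 < γ₁) (hγ₂ : 0 < γ₂)
    (y : Fin k → ℝ) :
    profile γ₁ γ₂ (C₁ / b) (C₂ / b)
        (Nm.N (vplus V fun j => (if j ∈ V then b ^ γ₁⁻¹ else b ^ γ₂⁻¹) * y j))
        (Nm.N (vminus V fun j => (if j ∈ V then b ^ γ₁⁻¹ else b ^ γ₂⁻¹) * y j)) =
      rescaledIntegrand V Nm γ₁ γ₂ C₁ C₂ (b ^ (γ₂⁻¹ - γ₁⁻¹)) y := by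
  have ht₁ := Real.rpow_pos_of_pos hb γ₁⁻¹
  have ht₂ := Real.rpow_pos_of_pos hb γ₂⁻¹
  rw [vplus_mul_scale ht₁, vminus_mul_scale ht₁ ht₂, Nm.smul_eq, Nm.smul_eq, abs_of_pos ht₁,
    abs_of_pos ht₂, profile_div_mul hb.ne' ht₁.le ht₂.le (Nm.N_nonneg _) (Nm.N_nonneg _)
      (Real.rpow_inv_rpow hb.le hγ₁.ne') (Real.rpow_inv_rpow hb.le hγ₂.ne'),
    ← Real.rpow_sub hb]
  rfl

lemma prod_ite_mem_rpow_inv {b : ℝ} (hb : 0 < b) :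
    ∏ j : Fin k, (if j ∈ V then b ^ γ₁⁻¹ else b ^ γ₂⁻¹) =
      b ^ ((V.card : ℝ) / γ₁ + ((k : ℝ) - V.card) / γ₂) := by
  have hcard : ((Finset.univ.filter (· ∉ V)).card : ℝ) = k - V.card := by
    rw [Finset.filter_notMem_eq_sdiff, Finset.card_univ_sdiff, Fintype.card_fin,
      Nat.cast_sub (V.card_le_univ.trans_eq (Fintype.card_fin k))]
  rw [Finset.prod_ite, Finset.prod_const, Finset.prod_const, ← Real.rpow_natCast,
    ← Real.rpow_natCast, ← Real.rpow_mul hb.le, ← Real.rpow_mul hb.le, ← Real.rpow_add hb,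
    hcard, Finset.filter_mem_eq_inter, Finset.univ_inter]
  ring_nf

lemma integral_profile_eq_rpow_mul {b : ℝ} (hb : 0 < b) (hγ₁ : 0 < γ₁) (hγ₂ : 0 < γ₂) :
    ∫ x, profile γ₁ γ₂ (C₁ / b) (C₂ / b) (Nm.N (vplus V x)) (Nm.N (vminus V x)) =
      b ^ ((V.card : ℝ) / γ₁ + ((k : ℝ) - V.card) / γ₂) *
        ∫ y, rescaledIntegrand V Nm γ₁ γ₂ C₁ C₂ (b ^ (γ₂⁻¹ - γ₁⁻¹)) y := by
  have h := integral_comp_mul_pi (fun j : Fin k => if j ∈ V then b ^ γ₁⁻¹ else b ^ γ₂⁻¹)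
    (fun j => by split_ifs <;> positivity)
    (fun x => profile γ₁ γ₂ (C₁ / b) (C₂ / b) (Nm.N (vplus V x)) (Nm.N (vminus V x)))
  simp_rw [profile_comp_mul_scale Nm C₁ C₂ hb hγ₁ hγ₂, prod_ite_mem_rpow_inv hb] at h
  rw [h, abs_of_pos (by positivity), smul_eq_mul, mul_inv_cancel_left₀ (by positivity)]

end Integrand

section Limit

variable {k : ℕ} (V : Finset (Fin k)) (Nm : MonNorm k) (γ₁ γ₂ C₁ C₂ : ℝ)

noncomputable def limitIntegrand (y : Fin k → ℝ) : ℝ :=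
  if ∀ j ∈ V, 0 ≤ y j then profile γ₁ γ₂ C₁ C₂ (Nm.N (posPartOn V y)) (Nm.N (offPart V (-y)))
  else 0

variable {V γ₁ γ₂ C₁ C₂}

lemma continuous_rescaledIntegrand (hγ₁ : 0 ≤ γ₁) (hγ₂ : 0 ≤ γ₂) (s : ℝ) :
    Continuous (rescaledIntegrand V Nm γ₁ γ₂ C₁ C₂ s) :=
  have := continuous_posPartOn V
  have := continuous_offPart V
  (Nm.continuous_N.comp (by fun_prop)).profile hγ₁ hγ₂ (Nm.continuous_N.comp (by fun_prop))

variable (hγ₁ : 0 < γ₁) (hγ₂ : 0 < γ₂) (hC₁ : 0 < C₁) (hC₂ : 0 < C₂)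
include hγ₁ hγ₂ hC₁ hC₂

lemma N_le_of_rescaledIntegrand_ne_zero {s : ℝ} (hs : s ∈ Set.Ioc 0 1) {y : Fin k → ℝ}
    (h : rescaledIntegrand V Nm γ₁ γ₂ C₁ C₂ s y ≠ 0) :
    Nm.N y ≤ C₁⁻¹ ^ γ₁⁻¹ + C₂⁻¹ ^ γ₂⁻¹ := by
  obtain ⟨h₁, h₂⟩ :=
    le_of_profile_ne_zero hC₁ hC₂ hγ₁ hγ₂ (Nm.N_nonneg _) (Nm.N_nonneg _) h
  refine (Nm.N_le_of_abs_le_add fun j => ?_).trans (add_le_add h₁ h₂)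
  have hs_inv : 1 ≤ s⁻¹ := one_le_inv_iff₀.2 hs
  by_cases hj : j ∈ V
  · simp only [Pi.add_apply, Pi.smul_apply, smul_eq_mul, posPartOn, offPart, hj, if_true,
      Pi.neg_apply, mul_zero, add_zero]
    rcases le_total 0 (y j) with hy | hy
    · simp [hy]
    · rw [max_eq_right hy, max_eq_left (neg_nonneg.2 hy), abs_mul, abs_of_pos (inv_pos.2 hs.1),
        abs_neg, abs_zero, zero_add]
      exact le_mul_of_one_le_left (abs_nonneg _) hs_inv
  · simp only [Pi.add_apply, Pi.smul_apply, smul_eq_mul, posPartOn, offPart, hj, if_false,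
      Pi.neg_apply, mul_zero, zero_add, abs_neg]
    exact le_add_of_nonneg_left (abs_nonneg _)

lemma exists_integrable_bound_rescaledIntegrand :
    ∃ g : (Fin k → ℝ) → ℝ, Integrable g ∧
      ∀ s ∈ Set.Ioc (0 : ℝ) 1, ∀ y, ‖rescaledIntegrand V Nm γ₁ γ₂ C₁ C₂ s y‖ ≤ g y := by
  set ρ := (∑ j, (Nm.N (Pi.single j 1))⁻¹) * (C₁⁻¹ ^ γ₁⁻¹ + C₂⁻¹ ^ γ₂⁻¹)
  refine ⟨(Metric.closedBall 0 ρ).indicator 1,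
    (integrableOn_const measure_closedBall_lt_top.ne).integrable_indicator
      Metric.isClosed_closedBall.measurableSet, fun s hs y => ?_⟩
  by_cases h : rescaledIntegrand V Nm γ₁ γ₂ C₁ C₂ s y = 0
  · rw [h, norm_zero]
    exact Set.indicator_nonneg (fun _ _ => zero_le_one) y
  have hy : y ∈ Metric.closedBall 0 ρ := by
    rw [mem_closedBall_zero_iff]
    exact (Nm.norm_le_mul_N y).trans (mul_le_mul_of_nonneg_left
      (N_le_of_rescaledIntegrand_ne_zero Nm hγ₁ hγ₂ hC₁ hC₂ hs h)
      (Finset.sum_nonneg fun j _ => inv_nonneg.2 (Nm.N_nonneg _)))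
  rw [Set.indicator_of_mem hy, Pi.one_apply]
  exact (Real.norm_of_nonneg (profile_nonneg _ _)).trans_le
    (profile_le_one hC₁.le hC₂.le (Nm.N_nonneg _) (Nm.N_nonneg _))

lemma tendsto_rescaledIntegrand (y : Fin k → ℝ) :
    Tendsto (fun s => rescaledIntegrand V Nm γ₁ γ₂ C₁ C₂ s y) (nhdsWithin 0 (Set.Ioi 0))
      (nhds (limitIntegrand V Nm γ₁ γ₂ C₁ C₂ y)) := by
  by_cases hy : ∀ j ∈ V, 0 ≤ y j
  · have hneg : posPartOn V (-y) = 0 := by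
      ext j
      by_cases hj : j ∈ V <;> simp [posPartOn, hj, hy j]
    have hcont : Continuous fun s : ℝ =>
        profile γ₁ γ₂ C₁ C₂ (Nm.N (posPartOn V y + s • offPart V y)) (Nm.N (offPart V (-y))) :=
      (Nm.continuous_N.comp (by fun_prop)).profile hγ₁.le hγ₂.le continuous_const
    rw [limitIntegrand, if_pos hy]
    simpa [rescaledIntegrand, hneg] using
      (hcont.tendsto 0).mono_left nhdsWithin_le_nhds
  · obtain ⟨j, hj, hyj⟩ := not_forall₂.1 hy
    have hm : 0 < Nm.N (posPartOn V (-y)) :=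
      Nm.N_pos fun h => by simpa [posPartOn, hj, hyj] using congrFun h j
    have hR : 0 < C₂⁻¹ ^ γ₂⁻¹ := by positivity
    simp only [limitIntegrand, if_neg hy]
    refine tendsto_const_nhds.congr' ?_
    filter_upwards [Ioo_mem_nhdsGT (div_pos hm hR)] with s hs
    by_contra h
    obtain ⟨-, h₂⟩ :=
      le_of_profile_ne_zero hC₁ hC₂ hγ₁ hγ₂ (Nm.N_nonneg _) (Nm.N_nonneg _) (Ne.symm h)
    have hle : s⁻¹ * Nm.N (posPartOn V (-y)) ≤ Nm.N (s⁻¹ • posPartOn V (-y) + offPart V (-y)) := by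
      rw [← abs_of_pos (inv_pos.2 hs.1), ← Nm.smul_eq]
      refine Nm.mono _ _ fun i => ?_
      by_cases hi : i ∈ V <;> simp [posPartOn, offPart, hi]
    rw [inv_mul_eq_div, div_le_iff₀ hs.1] at hle
    linarith [(lt_div_iff₀ hR).1 hs.2, mul_le_mul_of_nonneg_right h₂ hs.1.le]

lemma tendsto_integral_rescaledIntegrand :
    Tendsto (fun s => ∫ y, rescaledIntegrand V Nm γ₁ γ₂ C₁ C₂ s y) (nhdsWithin 0 (Set.Ioi 0))
      (nhds (∫ y, limitIntegrand V Nm γ₁ γ₂ C₁ C₂ y)) := by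
  obtain ⟨g, hg, hbound⟩ := exists_integrable_bound_rescaledIntegrand Nm hγ₁ hγ₂ hC₁ hC₂
  refine tendsto_integral_filter_of_dominated_convergence g
    (.of_forall fun s => (continuous_rescaledIntegrand Nm hγ₁.le hγ₂.le s).aestronglyMeasurable)
    ?_ hg (.of_forall (tendsto_rescaledIntegrand Nm hγ₁ hγ₂ hC₁ hC₂))
  filter_upwards [Ioc_mem_nhdsGT zero_lt_one] with s hs
  exact .of_forall (hbound s hs)

lemma profile_le_rescaledIntegrand_of_mem_Icc {s ε : ℝ} (hs : s ∈ Set.Ioc 0 1) (hε : 0 < ε)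
    {y : Fin k → ℝ} (hy : y ∈ Set.Icc (0 : Fin k → ℝ) fun _ => ε) :
    profile γ₁ γ₂ C₁ C₂ (Nm.N 1 * ε) (Nm.N 1 * ε) ≤ rescaledIntegrand V Nm γ₁ γ₂ C₁ C₂ s y := by
  have hy0 (j : Fin k) : 0 ≤ y j := hy.1 j
  have hyε (j : Fin k) : y j ≤ ε := hy.2 j
  have hN (z : Fin k → ℝ) (hz : ∀ j, |z j| ≤ ε) : Nm.N z ≤ Nm.N 1 * ε :=
    (Nm.N_le_mul_norm z).trans (mul_le_mul_of_nonneg_left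
      ((pi_norm_le_iff_of_nonneg hε.le).2 hz) (Nm.N_nonneg _))
  refine profile_le_profile hC₁.le hC₂.le hγ₁.le hγ₂.le (Nm.N_nonneg _) (Nm.N_nonneg _)
    (hN _ fun j => ?_) (hN _ fun j => ?_)
  · by_cases hj : j ∈ V
    · simp [posPartOn, offPart, hj, max_eq_left (hy0 j), abs_of_nonneg (hy0 j), hyε j]
    · simp only [Pi.add_apply, Pi.smul_apply, smul_eq_mul, posPartOn, offPart, hj, if_false,
        zero_add, abs_mul, abs_of_pos hs.1, abs_of_nonneg (hy0 j)]
      nlinarith [hs.2, hy0 j, hyε j]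
  · by_cases hj : j ∈ V
    · simp [posPartOn, offPart, hj, max_eq_right (neg_nonpos.2 (hy0 j)), hε.le]
    · simp [posPartOn, offPart, hj, abs_of_nonneg (hy0 j), hyε j]

lemma exists_pos_le_integral_rescaledIntegrand :
    ∃ c > 0, ∀ s ∈ Set.Ioc (0 : ℝ) 1, c ≤ ∫ y, rescaledIntegrand V Nm γ₁ γ₂ C₁ C₂ s y := by
  set M := Nm.N 1
  have hcont : Continuous fun t : ℝ => profile γ₁ γ₂ C₁ C₂ (M * t) (M * t) :=
    (continuous_const_mul M).profile hγ₁.le hγ₂.le (continuous_const_mul M)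
  obtain ⟨ε, hpos, hε⟩ : ∃ ε, 0 < profile γ₁ γ₂ C₁ C₂ (M * ε) (M * ε) ∧ 0 < ε := by
    have h0 : 0 < profile γ₁ γ₂ C₁ C₂ (M * 0) (M * 0) := by
      simp [profile_zero_zero hγ₁ hγ₂]
    exact (((hcont.tendsto 0).eventually (lt_mem_nhds h0)).filter_mono nhdsWithin_le_nhds |>.and
      (self_mem_nhdsWithin (s := Set.Ioi 0))).exists
  have hvol : 0 < volume.real (Set.Icc (0 : Fin k → ℝ) fun _ => ε) := by
    rw [measureReal_def, Real.volume_Icc_pi_toReal (a := 0) fun _ => hε.le]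
    exact Finset.prod_pos fun _ _ => by simpa using hε
  obtain ⟨g, hg, hbound⟩ := exists_integrable_bound_rescaledIntegrand Nm hγ₁ hγ₂ hC₁ hC₂
  refine ⟨_, mul_pos hpos hvol, fun s hs => ?_⟩
  have hint : Integrable (rescaledIntegrand V Nm γ₁ γ₂ C₁ C₂ s) :=
    hg.mono' (continuous_rescaledIntegrand Nm hγ₁.le hγ₂.le s).aestronglyMeasurable
      (.of_forall (hbound s hs))
  calc profile γ₁ γ₂ C₁ C₂ (M * ε) (M * ε) * volume.real (Set.Icc (0 : Fin k → ℝ) fun _ => ε)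
      ≤ ∫ y in Set.Icc (0 : Fin k → ℝ) fun _ => ε, rescaledIntegrand V Nm γ₁ γ₂ C₁ C₂ s y :=
        setIntegral_ge_of_const_le_real measurableSet_Icc measure_Icc_lt_top.ne
          (fun _ => profile_le_rescaledIntegrand_of_mem_Icc Nm hγ₁ hγ₂ hC₁ hC₂ hs hε)
          hint.integrableOn
    _ ≤ ∫ y, rescaledIntegrand V Nm γ₁ γ₂ C₁ C₂ s y :=
        setIntegral_le_integral hint (.of_forall fun _ => profile_nonneg _ _)

end Limit

lemma tendsto_rpow_nhdsGT_zero {δ : ℝ} (hδ : 0 < δ) :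
    Tendsto (fun b : ℝ => b ^ δ) (nhdsWithin 0 (Set.Ioi 0)) (nhdsWithin 0 (Set.Ioi 0)) := by
  refine tendsto_nhdsWithin_iff.2 ⟨?_, ?_⟩
  · simpa [Real.zero_rpow hδ.ne'] using
      (Real.continuousAt_rpow_const 0 δ (Or.inr hδ.le)).tendsto.mono_left nhdsWithin_le_nhds
  · filter_upwards [self_mem_nhdsWithin] with b hb
    exact Real.rpow_pos_of_pos hb δ

theorem stmt_14_general {k : ℕ} (V : Finset (Fin k)) (Nm : MonNorm k)
    (γ₁ γ₂ C₁ C₂ : ℝ)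
    (hγ₂0 : 0 < γ₂) (hγ : γ₂ ≤ γ₁)
    (hC₁ : 0 < C₁) (hC₂ : 0 < C₂) :
    ∃ c : ℝ, 0 < c ∧
      Tendsto (fun b : ℝ =>
          b ^ (-((V.card : ℝ) / γ₁ + ((k : ℝ) - V.card) / γ₂)) *
            ∫ x : Fin k → ℝ,
              (max (1 - C₁ / b * Nm.N (vplus V x) ^ γ₁ -
                    C₂ / b * Nm.N (vminus V x) ^ γ₂) 0) ^ 2)
        (nhdsWithin 0 (Set.Ioi 0)) (nhds c) := by
  have hγ₁0 : 0 < γ₁ := hγ₂0.trans_le hγ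
  have hδ : 0 ≤ γ₂⁻¹ - γ₁⁻¹ := sub_nonneg.2 (inv_anti₀ hγ₂0 hγ)
  set F := fun s => ∫ y, rescaledIntegrand V Nm γ₁ γ₂ C₁ C₂ s y
  obtain ⟨L, hL⟩ : ∃ L, Tendsto (fun b : ℝ => F (b ^ (γ₂⁻¹ - γ₁⁻¹)))
      (nhdsWithin 0 (Set.Ioi 0)) (nhds L) := by
    rcases hδ.eq_or_lt with h | h
    · exact ⟨F 1, by simp [← h]⟩
    · exact ⟨_, (tendsto_integral_rescaledIntegrand Nm hγ₁0 hγ₂0 hC₁ hC₂).comp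
        (tendsto_rpow_nhdsGT_zero h)⟩
  obtain ⟨c, hc, hle⟩ := exists_pos_le_integral_rescaledIntegrand Nm hγ₁0 hγ₂0 hC₁ hC₂
  refine ⟨L, hc.trans_le (ge_of_tendsto hL ?_), hL.congr' ?_⟩
  · filter_upwards [Ioc_mem_nhdsGT zero_lt_one] with b hb
    exact hle _ ⟨Real.rpow_pos_of_pos hb.1 _, Real.rpow_le_one hb.1.le hb.2 hδ⟩
  · filter_upwards [self_mem_nhdsWithin] with b hb
    change _ = _ * ∫ x, profile γ₁ γ₂ (C₁ / b) (C₂ / b) (Nm.N (vplus V x)) (Nm.N (vminus V x))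
    rw [integral_profile_eq_rpow_mul Nm C₁ C₂ hb hγ₁0 hγ₂0, ← mul_assoc, ← Real.rpow_add hb,
      neg_add_cancel, Real.rpow_zero, one_mul]

/-- the normalized integral
`b^{−(k₊/γ₁+(k−k₊)/γ₂)} ∫ (1 − (C₁/b)‖(x)_{V+}‖^{γ₁} − (C₂/b)‖(x)_{V−}‖^{γ₂})₊² dx`
converges to a finite positive constant as `b → 0⁺`. -/
theorem stmt_14 {k : ℕ} (V : Finset (Fin k)) (Nm : MonNorm k)
    (γ₁ γ₂ C₁ C₂ : ℝ)
    (hγ₂0 : 0 < γ₂) (hγ : γ₂ ≤ γ₁) (hγ₁1 : γ₁ ≤ 1)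
    (hC₁ : 0 < C₁) (hC₂ : 0 < C₂) :
    ∃ c : ℝ, 0 < c ∧
      Tendsto (fun b : ℝ =>
          b ^ (-((V.card : ℝ) / γ₁ + ((k : ℝ) - V.card) / γ₂)) *
            ∫ x : Fin k → ℝ,
              (max (1 - C₁ / b * Nm.N (vplus V x) ^ γ₁ -
                    C₂ / b * Nm.N (vminus V x) ^ γ₂) 0) ^ 2)
        (nhdsWithin 0 (Set.Ioi 0)) (nhds c) :=
  stmt_14_general V Nm γ₁ γ₂ C₁ C₂ hγ₂0 hγ hC₁ hC₂
end
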